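/- Let D be a domain in ℝ^d satisfying condition (A), let h : [0,T] → ℝ^d be a continuous function of bounded variation with h(0) ∈ closure(D), and suppose (x, k) solves the Skorohod problem (h, D, 𝒩). Then for all 0 ≤ s < t ≤ T the total variation of x satisfies |x|_s^t ≤ 2(√2 + 1) |h|_s^t. -/

import Mathlib

open MeasureTheory Set
open scoped RealInnerProductSpace ENNReal

noncomputable section

abbrev Ed (d : ℕ) := EuclideanSpace ℝ (Fin d)

/-- The set `𝒩_{x,r}` of inward unit normals at `x` realized by a ball of radius `r`. -/
def normalCone {d : ℕ} (D : Set (Ed d)) (x : Ed d) (r : ℝ) : Set (Ed d) :=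
  {n | ‖n‖ = 1 ∧ Metric.ball (x - r • n) r ∩ D = ∅}

/-- The set `𝒩_x` of inward unit normals at `x`. -/
def inwardNormals {d : ℕ} (D : Set (Ed d)) (x : Ed d) : Set (Ed d) :=
  ⋃ r > (0:ℝ), normalCone D x r

/-- Condition (A) with constant `r₀`. -/
def CondA {d : ℕ} (D : Set (Ed d)) (r₀ : ℝ) : Prop :=
  0 < r₀ ∧ ∀ x ∈ frontier D,
    inwardNormals D x = normalCone D x r₀ ∧ (normalCone D x r₀).Nonempty

/-- Condition (B) with constants `δ₀`, `β`. -/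
def CondB {d : ℕ} (D : Set (Ed d)) (δ₀ β : ℝ) : Prop :=
  0 < δ₀ ∧ 1 ≤ β ∧ ∀ x ∈ frontier D, ∃ l : Ed d, ‖l‖ = 1 ∧
    ∀ y ∈ Metric.ball x δ₀ ∩ frontier D, ∀ n ∈ inwardNormals D y, (1:ℝ)/β ≤ ⟪l, n⟫

/-- Condition (D) with data `m, lam, R, a, xs`. -/
def CondD {d : ℕ} (D : Set (Ed d)) (m : ℕ) (lam R : ℝ) (a xs : Fin m → Ed d) : Prop :=
  1 ≤ m ∧ 0 < lam ∧ 0 < R ∧ (∀ i, ‖a i‖ = 1) ∧ (∀ i, xs i ∈ frontier D) ∧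
  frontier D ⊆ ⋃ i, Metric.ball (xs i) R ∧
  ∀ x ∈ frontier D, ∀ i, x ∈ Metric.ball (xs i) (2*R) →
    ∀ n ∈ inwardNormals D x, lam ≤ ⟪n, a i⟫

/-- The pair `(x, k)` solves the Skorohod problem `(h, D, 𝒩)` on `[0, T]`. -/
structure IsSkorohodSolution {d : ℕ} (D : Set (Ed d)) (h x k : ℝ → Ed d) (T : ℝ) : Prop where
  h0_mem : h 0 ∈ closure D
  decomp : ∀ t ∈ Icc 0 T, x t = h t + k t
  cont : ContinuousOn x (Icc 0 T)
  mem_closure : ∀ t ∈ Icc 0 T, x t ∈ closure D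
  init : x 0 = h 0
  cont_k : ContinuousOn k (Icc 0 T)
  k_zero : k 0 = 0
  bv : eVariationOn k (Icc 0 T) ≠ ⊤
  reflect : ∃ (μ : Measure ℝ) (n : ℝ → Ed d), Measurable n ∧
    (∀ t ∈ Icc 0 T, μ (Icc 0 t) = eVariationOn k (Icc 0 t)) ∧
    (∀ t ∈ Icc 0 T, k t = ∫ s in Icc 0 t, n s ∂μ) ∧
    (∀ᵐ s ∂(μ.restrict (Icc 0 T)), x s ∈ frontier D ∧ n s ∈ inwardNormals D (x s))

/-- `‖f‖_{[s,t]} = sup_{u,v∈[s,t]} |f u - f v|`. -/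
def oscNorm {E : Type*} [NormedAddCommGroup E] (f : ℝ → E) (s t : ℝ) : ℝ :=
  sSup {c | ∃ u ∈ Icc s t, ∃ v ∈ Icc s t, c = ‖f u - f v‖}

/-- `‖f‖_{[s,t],θ}`: the `θ`-Hölder seminorm on `[s,t]`. -/
def holderSemi {E : Type*} [NormedAddCommGroup E] (f : ℝ → E) (s t θ : ℝ) : ℝ :=
  sSup {c | ∃ u ∈ Icc s t, ∃ v ∈ Icc s t, u ≠ v ∧ c = ‖f u - f v‖ / |u - v| ^ θ}


lemma norm_one_of_mem_inwardNormals {d : ℕ} {D : Set (Ed d)} {y n : Ed d}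
    (hn : n ∈ inwardNormals D y) : ‖n‖ = 1 := by
  simp only [inwardNormals, mem_iUnion] at hn
  obtain ⟨r, -, hn⟩ := hn
  exact hn.1

lemma geom_ineq {d : ℕ} {D : Set (Ed d)} {r₀ : ℝ} (hA : CondA D r₀)
    {y n z : Ed d} (hy : y ∈ frontier D) (hn : n ∈ inwardNormals D y)
    (hz : z ∈ closure D) : -‖z - y‖ ^ 2 ≤ 2 * r₀ * ⟪z - y, n⟫ := by
  have hr₀ := hA.1
  have hn' : n ∈ normalCone D y r₀ := by rw [← (hA.2 y hy).1]; exact hn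
  obtain ⟨hn1, hball⟩ := hn'
  have hzb : z ∉ Metric.ball (y - r₀ • n) r₀ := by
    intro hzb
    have hD : D ⊆ (Metric.ball (y - r₀ • n) r₀)ᶜ := by
      intro w hw hwb
      exact absurd (mem_inter hwb hw) (by rw [hball]; exact fun h => h)
    have := closure_minimal hD (Metric.isOpen_ball.isClosed_compl)
    exact this hz hzb
  have hdist : r₀ ≤ ‖z - (y - r₀ • n)‖ := by
    rw [Metric.mem_ball, dist_eq_norm] at hzb
    linarith [not_lt.mp hzb]
  have hexp : z - (y - r₀ • n) = (z - y) + r₀ • n := by abel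
  have hsq : r₀ ^ 2 ≤ ‖(z - y) + r₀ • n‖ ^ 2 := by
    rw [← hexp]
    have h0 : (0:ℝ) ≤ ‖z - (y - r₀ • n)‖ := norm_nonneg _
    nlinarith
  have hnorm : ‖(z - y) + r₀ • n‖ ^ 2
      = ‖z - y‖ ^ 2 + 2 * ⟪z - y, r₀ • n⟫ + ‖r₀ • n‖ ^ 2 := by
    rw [@norm_add_sq_real]
  have h1 : ‖r₀ • n‖ ^ 2 = r₀ ^ 2 := by
    rw [norm_smul, hn1, Real.norm_eq_abs, abs_of_pos hr₀]; ring
  have h2 : ⟪z - y, r₀ • n⟫ = r₀ * ⟪z - y, n⟫ := real_inner_smul_right _ _ _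
  nlinarith [hsq, hnorm]


lemma eVar_Icc_sum {E : Type*} [PseudoEMetricSpace E] (f : ℝ → E) {w : ℕ → ℝ}
    (hw : Monotone w) (m : ℕ) :
    eVariationOn f (Icc (w 0) (w m)) =
      ∑ i ∈ Finset.range m, eVariationOn f (Icc (w i) (w (i + 1))) := by
  induction m with
  | zero =>
      simp [eVariationOn.subsingleton f (by simp [Set.Icc_self] : (Icc (w 0) (w 0)).Subsingleton)]
  | succ m ih =>
      have h1 : w 0 ≤ w m := hw (Nat.zero_le m)
      have h2 : w m ≤ w (m + 1) := hw (Nat.le_succ m)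
      have := eVariationOn.Icc_add_Icc f (s := (univ : Set ℝ)) h1 h2 (mem_univ (w m))
      simp only [Set.univ_inter] at this
      rw [Finset.sum_range_succ, ← ih, ← this]

lemma sum_measure_Ioc_le (μ : Measure ℝ) {w : ℕ → ℝ} (hw : Monotone w) (m : ℕ) :
    ∑ i ∈ Finset.range m, μ (Ioc (w i) (w (i + 1))) ≤ μ (Ioc (w 0) (w m)) := by
  induction m with
  | zero => simp
  | succ m ih =>
      have h1 : w 0 ≤ w m := hw (Nat.zero_le m)
      have h2 : w m ≤ w (m + 1) := hw (Nat.le_succ m)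
      have hdisj : Disjoint (Ioc (w 0) (w m)) (Ioc (w m) (w (m + 1))) := by
        rw [Set.disjoint_left]
        rintro z ⟨-, hz2⟩ ⟨hz3, -⟩
        exact absurd hz3 (not_lt.mpr hz2)
      have hu : μ (Ioc (w 0) (w m)) + μ (Ioc (w m) (w (m + 1)))
          = μ (Ioc (w 0) (w (m + 1))) := by
        rw [← measure_union hdisj measurableSet_Ioc, Set.Ioc_union_Ioc_eq_Ioc h1 h2]
      rw [Finset.sum_range_succ, ← hu]
      exact add_le_add_left ih _

lemma eVar_add_le {d : ℕ} (f g : ℝ → EuclideanSpace ℝ (Fin d)) (s : Set ℝ) :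
    eVariationOn (fun r => f r + g r) s ≤ eVariationOn f s + eVariationOn g s := by
  apply iSup_le
  rintro ⟨m, u, hu, hus⟩
  calc ∑ i ∈ Finset.range m, edist (f (u (i+1)) + g (u (i+1))) (f (u i) + g (u i))
      ≤ ∑ i ∈ Finset.range m, (edist (f (u (i+1))) (f (u i)) + edist (g (u (i+1))) (g (u i))) :=
        Finset.sum_le_sum fun i _ => edist_add_add_le _ _ _ _
    _ = (∑ i ∈ Finset.range m, edist (f (u (i+1))) (f (u i)))
        + ∑ i ∈ Finset.range m, edist (g (u (i+1))) (g (u i)) := Finset.sum_add_distrib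
    _ ≤ _ := add_le_add (eVariationOn.sum_le (f := f) (n := m) hu hus) (eVariationOn.sum_le (f := g) (n := m) hu hus)


lemma saisho_step {d : ℕ} (μ : Measure ℝ) (n k : ℝ → Ed d) {u v : ℝ} (huv : u ≤ v)
    (hn : Measurable n) (hb1 : ∀ r, ‖n r‖ ≤ 1)
    (hfin : μ (Ioc u v) ≠ ⊤)
    (hkint : ∀ a b, u ≤ a → a ≤ b → b ≤ v → k b - k a = ∫ q in Ioc a b, n q ∂μ)
    (hkmeas : AEStronglyMeasurable k (μ.restrict (Ioc u v)))
    (c : ℝ)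
    (hc : ∀ᵐ r ∂(μ.restrict (Ioc u v)), ⟪k r - k u, n r⟫ ≤ c) :
    ‖k v - k u‖ ^ 2 ≤ 2 * c * (μ (Ioc u v)).toReal := by
  set ν := μ.restrict (Ioc u v) with hν
  set M := (μ (Ioc u v)).toReal with hM
  haveI : IsFiniteMeasure ν := ⟨by
    rw [hν, Measure.restrict_apply_univ]; exact hfin.lt_top⟩
  have hInt : Integrable n ν :=
    (integrable_const (1:ℝ)).mono' hn.aestronglyMeasurable (Filter.Eventually.of_forall hb1)
  have hΔ : k v - k u = ∫ r, n r ∂ν := hkint u v le_rfl huv le_rfl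
  -- bound for increments of k
  have hkd : ∀ a b, u ≤ a → a ≤ b → b ≤ v → ‖k b - k a‖ ≤ M := by
    intro a b hua hab hbv
    rw [hkint a b hua hab hbv]
    haveI : IsFiniteMeasure (μ.restrict (Ioc a b)) := ⟨by
      rw [Measure.restrict_apply_univ]
      exact (lt_of_le_of_lt (measure_mono (Ioc_subset_Ioc hua hbv)) hfin.lt_top)⟩
    calc ‖∫ q in Ioc a b, n q ∂μ‖ ≤ 1 * ((μ.restrict (Ioc a b)) univ).toReal :=
          norm_integral_le_of_norm_le_const (Filter.Eventually.of_forall hb1)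
      _ ≤ M := by
          rw [one_mul, Measure.restrict_apply_univ]
          exact ENNReal.toReal_mono hfin (measure_mono (Ioc_subset_Ioc hua hbv))
  -- the kernel G
  set G : ℝ × ℝ → ℝ := fun p => if p.1 < p.2 then ⟪n p.2, n p.1⟫ else 0 with hG
  have hGmeas : Measurable G := by
    apply Measurable.ite (measurableSet_lt measurable_fst measurable_snd)
    · exact (hn.comp measurable_snd).inner (hn.comp measurable_fst)
    · exact measurable_const
  have hGbd : ∀ p, ‖G p‖ ≤ 1 := by
    intro p
    rw [hG]
    by_cases hp : p.1 < p.2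
    · simp only [if_pos hp]
      calc ‖⟪n p.2, n p.1⟫‖ ≤ ‖n p.2‖ * ‖n p.1‖ := by
            rw [Real.norm_eq_abs]; exact abs_real_inner_le_norm _ _
        _ ≤ 1 := by nlinarith [hb1 p.1, hb1 p.2, norm_nonneg (n p.1), norm_nonneg (n p.2)]
    · simp [if_neg hp]
  have hGint : Integrable G (ν.prod ν) :=
    (integrable_const (1:ℝ)).mono' hGmeas.aestronglyMeasurable (Filter.Eventually.of_forall hGbd)
  have hGsint : Integrable (fun p : ℝ × ℝ => G (Prod.swap p)) (ν.prod ν) :=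
    (integrable_const (1:ℝ)).mono' (hGmeas.comp measurable_swap).aestronglyMeasurable
      (Filter.Eventually.of_forall fun p => hGbd _)
  have hInnerInt : Integrable (fun p : ℝ × ℝ => ⟪n p.2, n p.1⟫) (ν.prod ν) := by
    refine (integrable_const (1:ℝ)).mono'
      ((hn.comp measurable_snd).inner (hn.comp measurable_fst)).aestronglyMeasurable
      (Filter.Eventually.of_forall fun p => ?_)
    calc ‖⟪n p.2, n p.1⟫‖ ≤ ‖n p.2‖ * ‖n p.1‖ := by
          rw [Real.norm_eq_abs]; exact abs_real_inner_le_norm _ _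
      _ ≤ 1 := by nlinarith [hb1 p.1, hb1 p.2, norm_nonneg (n p.1), norm_nonneg (n p.2)]
  -- swap identity
  have hswap : ∫ p, G (Prod.swap p) ∂(ν.prod ν) = ∫ p, G p ∂(ν.prod ν) := by
    conv_rhs => rw [← Measure.prod_swap]
    rw [integral_map measurable_swap.aemeasurable]
    rw [Measure.prod_swap]
    exact hGmeas.aestronglyMeasurable
  -- sum bound
  have hsum : (∫ p, G p ∂(ν.prod ν)) + (∫ p, G (Prod.swap p) ∂(ν.prod ν))
      ≤ ∫ p, ⟪n p.2, n p.1⟫ ∂(ν.prod ν) := by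
    rw [← integral_add hGint hGsint]
    apply integral_mono_ae (hGint.add hGsint) hInnerInt
    apply Filter.Eventually.of_forall
    rintro ⟨a, b⟩
    have : (G + fun p => G (Prod.swap p)) (a, b) = G (a, b) + G (b, a) := rfl
    rw [this]
    simp only [hG]
    rcases lt_trichotomy a b with hab | hab | hab
    · rw [if_pos hab, if_neg (not_lt.mpr hab.le)]; simp
    · subst hab
      rw [if_neg (lt_irrefl a)]
      simpa using real_inner_self_nonneg (x := n a)
    · rw [if_neg (not_lt.mpr hab.le), if_pos hab]
      rw [real_inner_comm]; simp
  -- double integral equals ‖Δ‖²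
  have hdouble : ∫ p, ⟪n p.2, n p.1⟫ ∂(ν.prod ν) = ‖k v - k u‖ ^ 2 := by
    rw [integral_prod _ hInnerInt]
    have hin : ∀ r, ∫ q, ⟪n q, n r⟫ ∂ν = ⟪k v - k u, n r⟫ := by
      intro r
      have : ∀ q, ⟪n q, n r⟫ = ⟪n r, n q⟫ := fun q => real_inner_comm _ _
      simp_rw [this]
      rw [integral_inner hInt, ← hΔ, real_inner_comm]
    simp_rw [hin]
    have : ∀ r, ⟪k v - k u, n r⟫ = ⟪(k v - k u), n r⟫ := fun _ => rfl
    rw [integral_inner hInt, ← hΔ, real_inner_self_eq_norm_sq]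
  -- J = ∫ G
  have hJmeas : AEStronglyMeasurable (fun r => ⟪k v - k r, n r⟫) ν :=
    (aestronglyMeasurable_const.sub hkmeas).inner hn.aestronglyMeasurable
  have hJbd : ∀ᵐ r ∂ν, ‖⟪k v - k r, n r⟫‖ ≤ M := by
    filter_upwards [ae_restrict_mem measurableSet_Ioc] with r hr
    calc ‖⟪k v - k r, n r⟫‖ ≤ ‖k v - k r‖ * ‖n r‖ := by
          rw [Real.norm_eq_abs]; exact abs_real_inner_le_norm _ _
      _ ≤ ‖k v - k r‖ * 1 := by
          exact mul_le_mul_of_nonneg_left (hb1 r) (norm_nonneg _)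
      _ ≤ M := by rw [mul_one]; exact hkd r v hr.1.le hr.2 le_rfl
  have hJint : Integrable (fun r => ⟪k v - k r, n r⟫) ν :=
    (integrable_const M).mono' hJmeas hJbd
  have hJeq : ∫ r, ⟪k v - k r, n r⟫ ∂ν = ∫ p, G p ∂(ν.prod ν) := by
    rw [integral_prod _ hGint]
    apply integral_congr_ae
    filter_upwards [ae_restrict_mem measurableSet_Ioc] with r hr
    have h1 : k v - k r = ∫ q in Ioc r v, n q ∂μ := hkint r v hr.1.le hr.2 le_rfl
    have h2 : μ.restrict (Ioc r v) = ν.restrict (Ioc r v) := by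
      rw [hν, Measure.restrict_restrict measurableSet_Ioc,
        Set.inter_eq_self_of_subset_left (Ioc_subset_Ioc_left hr.1.le)]
    have h3 : k v - k r = ∫ q, (Ioc r v).indicator n q ∂ν := by
      rw [h1, integral_indicator measurableSet_Ioc, ← h2]
    rw [h3]
    have h4 : ⟪∫ q, (Ioc r v).indicator n q ∂ν, n r⟫
        = ∫ q, ⟪(Ioc r v).indicator n q, n r⟫ ∂ν := by
      rw [real_inner_comm, ← integral_inner (hInt.indicator measurableSet_Ioc)]
      congr 1
      funext q
      rw [real_inner_comm]
    rw [h4]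
    apply integral_congr_ae
    filter_upwards [ae_restrict_mem measurableSet_Ioc] with q hq
    by_cases hrq : r < q
    · rw [Set.indicator_of_mem (show q ∈ Ioc r v from ⟨hrq, hq.2⟩) n, hG]
      simp only [if_pos hrq]
    · rw [Set.indicator_of_notMem (fun hmem => hrq hmem.1), hG]
      simp only [if_neg hrq, inner_zero_left]
  -- I2 bound
  have hI2meas : AEStronglyMeasurable (fun r => ⟪k r - k u, n r⟫) ν :=
    (hkmeas.sub aestronglyMeasurable_const).inner hn.aestronglyMeasurable
  have hI2bd : ∀ᵐ r ∂ν, ‖⟪k r - k u, n r⟫‖ ≤ M := by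
    filter_upwards [ae_restrict_mem measurableSet_Ioc] with r hr
    calc ‖⟪k r - k u, n r⟫‖ ≤ ‖k r - k u‖ * ‖n r‖ := by
          rw [Real.norm_eq_abs]; exact abs_real_inner_le_norm _ _
      _ ≤ ‖k r - k u‖ * 1 := mul_le_mul_of_nonneg_left (hb1 r) (norm_nonneg _)
      _ ≤ M := by rw [mul_one]; exact hkd u r le_rfl hr.1.le hr.2
  have hI2int : Integrable (fun r => ⟪k r - k u, n r⟫) ν :=
    (integrable_const M).mono' hI2meas hI2bd
  have hI2 : ∫ r, ⟪k r - k u, n r⟫ ∂ν ≤ c * M := by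
    calc ∫ r, ⟪k r - k u, n r⟫ ∂ν ≤ ∫ _, c ∂ν := integral_mono_ae hI2int (integrable_const c) hc
      _ = c * M := by
          rw [integral_const, hν, measureReal_def, Measure.restrict_apply_univ, smul_eq_mul, mul_comm]
  -- main decomposition
  have hmain : ‖k v - k u‖ ^ 2
      = (∫ r, ⟪k v - k r, n r⟫ ∂ν) + ∫ r, ⟪k r - k u, n r⟫ ∂ν := by
    rw [← integral_add hJint hI2int]
    have heq : ∀ r, ⟪k v - k r, n r⟫ + ⟪k r - k u, n r⟫ = ⟪k v - k u, n r⟫ := by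
      intro r
      rw [← inner_add_left]
      congr 1
      abel
    simp_rw [heq]
    rw [integral_inner hInt, ← hΔ, real_inner_self_eq_norm_sq]
  have hJhalf : 2 * (∫ r, ⟪k v - k r, n r⟫ ∂ν) ≤ ‖k v - k u‖ ^ 2 := by
    have := hsum
    rw [hswap, ← hJeq] at this
    rw [hdouble] at this
    linarith
  linarith [hmain, hJhalf, hI2]


lemma cell_bound {d : ℕ} (μ : Measure ℝ) (k h x : ℝ → Ed d) (r₀ δb : ℝ) {u v : ℝ}
    (huv : u ≤ v) (hr₀ : 0 < r₀) (hδ : 0 ≤ δb)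
    (hhfin : eVariationOn h (Icc u v) ≠ ⊤) (hxfin : eVariationOn x (Icc u v) ≠ ⊤)
    (hmfin : μ (Ioc u v) ≠ ⊤)
    (hS : ∀ a b, u ≤ a → a ≤ b → b ≤ v →
      ‖k b - k a‖ ^ 2 ≤ (2 * (eVariationOn h (Icc a b)).toReal +
        (min δb (eVariationOn x (Icc a b)).toReal) ^ 2 / r₀) * (μ (Ioc a b)).toReal) :
    eVariationOn k (Icc u v) ≤ ENNReal.ofReal (Real.sqrt
      ((2 * (eVariationOn h (Icc u v)).toReal + δb * (eVariationOn x (Icc u v)).toReal / r₀)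
        * (μ (Ioc u v)).toReal)) := by
  set Hc := (eVariationOn h (Icc u v)).toReal
  set Vc := (eVariationOn x (Icc u v)).toReal
  set mc := (μ (Ioc u v)).toReal
  set A := 2 * Hc + δb * Vc / r₀ with hA
  have hHc : 0 ≤ Hc := ENNReal.toReal_nonneg
  have hVc : 0 ≤ Vc := ENNReal.toReal_nonneg
  have hmc : 0 ≤ mc := ENNReal.toReal_nonneg
  have hA0 : 0 ≤ A := by positivity
  apply iSup_le
  rintro ⟨m, w, hw, hws⟩
  simp only
  -- real quantities
  set a : ℕ → ℝ := fun i => 2 * (eVariationOn h (Icc (w i) (w (i + 1)))).toReal +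
    δb * (eVariationOn x (Icc (w i) (w (i + 1)))).toReal / r₀ with ha
  set g : ℕ → ℝ := fun i => (μ (Ioc (w i) (w (i + 1)))).toReal with hg
  have ha0 : ∀ i, 0 ≤ a i := fun i => by positivity
  have hg0 : ∀ i, 0 ≤ g i := fun i => ENNReal.toReal_nonneg
  -- per-piece bound
  have hpiece : ∀ i, ‖k (w (i + 1)) - k (w i)‖ ≤ Real.sqrt (a i * g i) := by
    intro i
    have h1 := hS (w i) (w (i + 1)) (hws i).1 (hw (Nat.le_succ i)) (hws (i + 1)).2
    have h2 : (min δb (eVariationOn x (Icc (w i) (w (i + 1)))).toReal) ^ 2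
        ≤ δb * (eVariationOn x (Icc (w i) (w (i + 1)))).toReal := by
      have hm1 : min δb (eVariationOn x (Icc (w i) (w (i + 1)))).toReal ≤ δb := min_le_left _ _
      have hm2 : min δb (eVariationOn x (Icc (w i) (w (i + 1)))).toReal ≤ _ := min_le_right _ _
      have hm0 : 0 ≤ min δb (eVariationOn x (Icc (w i) (w (i + 1)))).toReal :=
        le_min hδ ENNReal.toReal_nonneg
      nlinarith
    have h3 : ‖k (w (i + 1)) - k (w i)‖ ^ 2 ≤ a i * g i := by
      refine h1.trans (mul_le_mul_of_nonneg_right ?_ ENNReal.toReal_nonneg)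
      have h4 : (min δb (eVariationOn x (Icc (w i) (w (i + 1)))).toReal) ^ 2 / r₀
          ≤ δb * (eVariationOn x (Icc (w i) (w (i + 1)))).toReal / r₀ :=
        (div_le_div_iff_of_pos_right hr₀).mpr h2
      simp only [ha]
      linarith
    calc ‖k (w (i + 1)) - k (w i)‖ = Real.sqrt (‖k (w (i + 1)) - k (w i)‖ ^ 2) :=
          (Real.sqrt_sq (norm_nonneg _)).symm
      _ ≤ Real.sqrt (a i * g i) := Real.sqrt_le_sqrt h3
  -- sum bounds for the coefficients
  have hba : ∀ (f : ℝ → Ed d), eVariationOn f (Icc u v) ≠ ⊤ →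
      ∑ i ∈ Finset.range m, (eVariationOn f (Icc (w i) (w (i + 1)))).toReal
        ≤ (eVariationOn f (Icc u v)).toReal := by
    intro f hf
    have hfl : ∀ i ∈ Finset.range m, eVariationOn f (Icc (w i) (w (i + 1))) ≠ ⊤ := by
      intro i _
      exact ne_top_of_le_ne_top hf
        (eVariationOn.mono f (Icc_subset_Icc (hws i).1 (hws (i + 1)).2))
    rw [← ENNReal.toReal_sum hfl]
    apply ENNReal.toReal_mono hf
    rw [← eVar_Icc_sum f hw m]
    exact eVariationOn.mono f (Icc_subset_Icc (hws 0).1 (hws m).2)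
  have hga : ∑ i ∈ Finset.range m, g i ≤ mc := by
    have hfl : ∀ i ∈ Finset.range m, μ (Ioc (w i) (w (i + 1))) ≠ ⊤ := by
      intro i _
      exact ne_top_of_le_ne_top hmfin
        (measure_mono (Ioc_subset_Ioc (hws i).1 (hws (i + 1)).2))
    rw [hg, ← ENNReal.toReal_sum hfl]
    apply ENNReal.toReal_mono hmfin
    exact (sum_measure_Ioc_le μ hw m).trans
      (measure_mono (Ioc_subset_Ioc (hws 0).1 (hws m).2))
  have haa : ∑ i ∈ Finset.range m, a i ≤ A := by
    have h1 := hba h hhfin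
    have h2 := hba x hxfin
    have : ∑ i ∈ Finset.range m, a i
        = 2 * (∑ i ∈ Finset.range m, (eVariationOn h (Icc (w i) (w (i + 1)))).toReal)
          + δb * (∑ i ∈ Finset.range m, (eVariationOn x (Icc (w i) (w (i + 1)))).toReal) / r₀ := by
      simp only [ha]
      rw [Finset.sum_add_distrib, ← Finset.mul_sum, ← Finset.sum_div, ← Finset.mul_sum]
    rw [this, hA]
    have : δb * (∑ i ∈ Finset.range m, (eVariationOn x (Icc (w i) (w (i + 1)))).toReal) / r₀
        ≤ δb * Vc / r₀ := by
      apply (div_le_div_iff_of_pos_right hr₀).mpr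
      exact mul_le_mul_of_nonneg_left h2 hδ
    linarith
  -- Cauchy-Schwarz
  have hCS : ∑ i ∈ Finset.range m, Real.sqrt (a i * g i) ≤ Real.sqrt (A * mc) := by
    have hsq : (∑ i ∈ Finset.range m, Real.sqrt (a i * g i)) ^ 2
        ≤ (∑ i ∈ Finset.range m, a i) * ∑ i ∈ Finset.range m, g i := by
      apply Finset.sum_sq_le_sum_mul_sum_of_sq_eq_mul
      · exact fun i _ => ha0 i
      · exact fun i _ => hg0 i
      · exact fun i _ => Real.sq_sqrt (mul_nonneg (ha0 i) (hg0 i))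
    have h5 : (∑ i ∈ Finset.range m, a i) * ∑ i ∈ Finset.range m, g i ≤ A * mc := by
      apply mul_le_mul haa hga (Finset.sum_nonneg fun i _ => hg0 i) hA0
    calc ∑ i ∈ Finset.range m, Real.sqrt (a i * g i)
        = Real.sqrt ((∑ i ∈ Finset.range m, Real.sqrt (a i * g i)) ^ 2) :=
          (Real.sqrt_sq (Finset.sum_nonneg fun i _ => Real.sqrt_nonneg _)).symm
      _ ≤ Real.sqrt (A * mc) := Real.sqrt_le_sqrt (hsq.trans h5)
  -- conclude
  calc ∑ i ∈ Finset.range m, edist (k (w (i + 1))) (k (w i))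
      = ∑ i ∈ Finset.range m, ENNReal.ofReal ‖k (w (i + 1)) - k (w i)‖ := by
        congr 1
        funext i
        rw [edist_dist, dist_eq_norm]
    _ = ENNReal.ofReal (∑ i ∈ Finset.range m, ‖k (w (i + 1)) - k (w i)‖) :=
        (ENNReal.ofReal_sum_of_nonneg fun i _ => norm_nonneg _).symm
    _ ≤ ENNReal.ofReal (Real.sqrt (A * mc)) := by
        apply ENNReal.ofReal_le_ofReal
        exact (Finset.sum_le_sum fun i _ => hpiece i).trans hCS


lemma grid_agg {d : ℕ} (μ : Measure ℝ) (k h x : ℝ → Ed d) (r₀ δb : ℝ) {u v : ℝ}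
    (hr₀ : 0 < r₀) (hδ : 0 ≤ δb) {w : ℕ → ℝ} (hw : Monotone w) (M : ℕ)
    (hw0 : w 0 = u) (hwM : w M = v)
    (hhfin : eVariationOn h (Icc u v) ≠ ⊤) (hxfin : eVariationOn x (Icc u v) ≠ ⊤)
    (hmfin : μ (Ioc u v) ≠ ⊤)
    (hcell : ∀ j, j < M → eVariationOn k (Icc (w j) (w (j+1))) ≤
      ENNReal.ofReal (Real.sqrt ((2 * (eVariationOn h (Icc (w j) (w (j+1)))).toReal
        + δb * (eVariationOn x (Icc (w j) (w (j+1)))).toReal / r₀)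
        * (μ (Ioc (w j) (w (j+1)))).toReal))) :
    eVariationOn k (Icc u v) ≤ ENNReal.ofReal (Real.sqrt
      ((2 * (eVariationOn h (Icc u v)).toReal + δb * (eVariationOn x (Icc u v)).toReal / r₀)
        * (μ (Ioc u v)).toReal)) := by
  have hws : ∀ j, j ≤ M → w j ∈ Icc u v := fun j hj =>
    ⟨hw0 ▸ hw (Nat.zero_le j), hwM ▸ hw hj⟩
  set Hc := (eVariationOn h (Icc u v)).toReal
  set Vc := (eVariationOn x (Icc u v)).toReal
  set mc := (μ (Ioc u v)).toReal
  set A := 2 * Hc + δb * Vc / r₀ with hA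
  have hHc : 0 ≤ Hc := ENNReal.toReal_nonneg
  have hVc : 0 ≤ Vc := ENNReal.toReal_nonneg
  have hmc : 0 ≤ mc := ENNReal.toReal_nonneg
  have hA0 : 0 ≤ A := by positivity
  set a : ℕ → ℝ := fun i => 2 * (eVariationOn h (Icc (w i) (w (i + 1)))).toReal +
    δb * (eVariationOn x (Icc (w i) (w (i + 1)))).toReal / r₀ with ha
  set g : ℕ → ℝ := fun i => (μ (Ioc (w i) (w (i + 1)))).toReal with hg
  have ha0 : ∀ i, 0 ≤ a i := fun i => by positivity
  have hg0 : ∀ i, 0 ≤ g i := fun i => ENNReal.toReal_nonneg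
  have hba : ∀ (f : ℝ → Ed d), eVariationOn f (Icc u v) ≠ ⊤ →
      ∑ i ∈ Finset.range M, (eVariationOn f (Icc (w i) (w (i + 1)))).toReal
        ≤ (eVariationOn f (Icc u v)).toReal := by
    intro f hf
    have hfl : ∀ i ∈ Finset.range M, eVariationOn f (Icc (w i) (w (i + 1))) ≠ ⊤ := by
      intro i hi
      rw [Finset.mem_range] at hi
      exact ne_top_of_le_ne_top hf
        (eVariationOn.mono f (Icc_subset_Icc (hws i hi.le).1 (hws (i + 1) hi).2))
    rw [← ENNReal.toReal_sum hfl]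
    apply ENNReal.toReal_mono hf
    rw [← eVar_Icc_sum f hw M]
    exact eVariationOn.mono f (Icc_subset_Icc (hws 0 (Nat.zero_le M)).1 (hws M le_rfl).2)
  have hga : ∑ i ∈ Finset.range M, g i ≤ mc := by
    have hfl : ∀ i ∈ Finset.range M, μ (Ioc (w i) (w (i + 1))) ≠ ⊤ := by
      intro i hi
      rw [Finset.mem_range] at hi
      exact ne_top_of_le_ne_top hmfin
        (measure_mono (Ioc_subset_Ioc (hws i hi.le).1 (hws (i + 1) hi).2))
    rw [hg, ← ENNReal.toReal_sum hfl]
    apply ENNReal.toReal_mono hmfin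
    exact (sum_measure_Ioc_le μ hw M).trans
      (measure_mono (Ioc_subset_Ioc (hws 0 (Nat.zero_le M)).1 (hws M le_rfl).2))
  have haa : ∑ i ∈ Finset.range M, a i ≤ A := by
    have h1 := hba h hhfin
    have h2 := hba x hxfin
    have heq : ∑ i ∈ Finset.range M, a i
        = 2 * (∑ i ∈ Finset.range M, (eVariationOn h (Icc (w i) (w (i + 1)))).toReal)
          + δb * (∑ i ∈ Finset.range M, (eVariationOn x (Icc (w i) (w (i + 1)))).toReal) / r₀ := by
      simp only [ha]
      rw [Finset.sum_add_distrib, ← Finset.mul_sum, ← Finset.sum_div, ← Finset.mul_sum]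
    rw [heq, hA]
    have h3 : δb * (∑ i ∈ Finset.range M, (eVariationOn x (Icc (w i) (w (i + 1)))).toReal) / r₀
        ≤ δb * Vc / r₀ := by
      apply (div_le_div_iff_of_pos_right hr₀).mpr
      exact mul_le_mul_of_nonneg_left h2 hδ
    linarith
  have hCS : ∑ i ∈ Finset.range M, Real.sqrt (a i * g i) ≤ Real.sqrt (A * mc) := by
    have hsq : (∑ i ∈ Finset.range M, Real.sqrt (a i * g i)) ^ 2
        ≤ (∑ i ∈ Finset.range M, a i) * ∑ i ∈ Finset.range M, g i := by
      apply Finset.sum_sq_le_sum_mul_sum_of_sq_eq_mul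
      · exact fun i _ => ha0 i
      · exact fun i _ => hg0 i
      · exact fun i _ => Real.sq_sqrt (mul_nonneg (ha0 i) (hg0 i))
    have h5 : (∑ i ∈ Finset.range M, a i) * ∑ i ∈ Finset.range M, g i ≤ A * mc :=
      mul_le_mul haa hga (Finset.sum_nonneg fun i _ => hg0 i) hA0
    calc ∑ i ∈ Finset.range M, Real.sqrt (a i * g i)
        = Real.sqrt ((∑ i ∈ Finset.range M, Real.sqrt (a i * g i)) ^ 2) :=
          (Real.sqrt_sq (Finset.sum_nonneg fun i _ => Real.sqrt_nonneg _)).symm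
      _ ≤ Real.sqrt (A * mc) := Real.sqrt_le_sqrt (hsq.trans h5)
  calc eVariationOn k (Icc u v) = eVariationOn k (Icc (w 0) (w M)) := by rw [hw0, hwM]
    _ = ∑ j ∈ Finset.range M, eVariationOn k (Icc (w j) (w (j + 1))) := eVar_Icc_sum k hw M
    _ ≤ ∑ j ∈ Finset.range M, ENNReal.ofReal (Real.sqrt (a j * g j)) := by
        apply Finset.sum_le_sum
        intro j hj
        rw [Finset.mem_range] at hj
        exact hcell j hj
    _ = ENNReal.ofReal (∑ j ∈ Finset.range M, Real.sqrt (a j * g j)) :=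
        (ENNReal.ofReal_sum_of_nonneg fun i _ => Real.sqrt_nonneg _).symm
    _ ≤ ENNReal.ofReal (Real.sqrt (A * mc)) := ENNReal.ofReal_le_ofReal hCS


set_option maxHeartbeats 2000000 in
/-- Aida–Sasaki, Lemma 2.4. Under condition (A), if `(x,k)` solves the
Skorohod problem for a continuous bounded-variation path `h`, then the total variation of `x`
on `[s,t]` is at most `2(√2+1)` times that of `h`. -/
theorem skorohod_variation_bound
    {d : ℕ} (D : Set (Ed d)) (r₀ : ℝ) (hA : CondA D r₀)
    (T : ℝ) (h x k : ℝ → Ed d)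
    (hh_cont : ContinuousOn h (Icc 0 T))
    (hh_bv : eVariationOn h (Icc 0 T) ≠ ⊤)
    (h0 : h 0 ∈ closure D)
    (hsol : IsSkorohodSolution D h x k T)
    (s t : ℝ) (hs : 0 ≤ s) (hst : s < t) (ht : t ≤ T) :
    eVariationOn x (Icc s t) ≤
      ENNReal.ofReal (2 * (Real.sqrt 2 + 1)) * eVariationOn h (Icc s t) := by
  obtain ⟨μ, n₀, hn₀meas, hμvar, hkrep, hae⟩ := hsol.reflect
  have hr₀ : 0 < r₀ := hA.1
  have h0T : (0:ℝ) ≤ T := hs.trans (hst.le.trans ht)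
  have hsubT : Icc s t ⊆ Icc 0 T := Icc_subset_Icc hs ht
  -- normalized direction field
  set n : ℝ → Ed d := fun r => if ‖n₀ r‖ ≤ 1 then n₀ r else 0 with hn_def
  have hb1 : ∀ r, ‖n r‖ ≤ 1 := by
    intro r
    by_cases hr : ‖n₀ r‖ ≤ 1
    · simpa [hn_def, if_pos hr] using hr
    · simp [hn_def, if_neg hr]
  have hnmeas : Measurable n := by
    exact Measurable.ite (measurableSet_le hn₀meas.norm measurable_const) hn₀meas measurable_const
  have haeT : ∀ᵐ r ∂(μ.restrict (Icc 0 T)),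
      x r ∈ frontier D ∧ n r ∈ inwardNormals D (x r) ∧ n r = n₀ r := by
    filter_upwards [hae] with r hr
    have h1 : ‖n₀ r‖ = 1 := norm_one_of_mem_inwardNormals hr.2
    have h2 : n r = n₀ r := by simp [hn_def, h1]
    exact ⟨hr.1, h2 ▸ hr.2, h2⟩
  -- finiteness of μ
  have hkT : eVariationOn k (Icc 0 T) ≠ ⊤ := hsol.bv
  have hμT : μ (Icc 0 T) ≠ ⊤ := by
    rw [hμvar T ⟨h0T, le_rfl⟩]; exact hkT
  have hμfin : ∀ {S : Set ℝ}, S ⊆ Icc 0 T → μ S ≠ ⊤ :=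
    fun hS => ne_top_of_le_ne_top hμT (measure_mono hS)
  have hIntOn : ∀ (S : Set ℝ), μ S ≠ ⊤ → Integrable n (μ.restrict S) := by
    intro S hS
    haveI : IsFiniteMeasure (μ.restrict S) := ⟨by rw [Measure.restrict_apply_univ]; exact hS.lt_top⟩
    exact (integrable_const (1:ℝ)).mono' hnmeas.aestronglyMeasurable
      (Filter.Eventually.of_forall hb1)
  -- k as an integral of n
  have hk_eq : ∀ b, 0 ≤ b → b ≤ T → k b = ∫ q in Icc 0 b, n q ∂μ := by
    intro b hb0 hbT
    rw [hkrep b ⟨hb0, hbT⟩]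
    apply integral_congr_ae
    have := haeT.filter_mono (ae_mono (Measure.restrict_mono (Icc_subset_Icc le_rfl hbT) le_rfl))
    filter_upwards [this] with r hr
    exact hr.2.2.symm
  have hkint : ∀ a b, 0 ≤ a → a ≤ b → b ≤ T → k b - k a = ∫ q in Ioc a b, n q ∂μ := by
    intro a b h0a hab hbT
    have hdisj : Disjoint (Icc 0 a) (Ioc a b) := by
      rw [Set.disjoint_left]
      rintro z ⟨-, hz2⟩ ⟨hz3, -⟩
      exact absurd hz3 (not_lt.mpr hz2)
    have hsplit : ∫ q in Icc 0 b, n q ∂μ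
        = (∫ q in Icc 0 a, n q ∂μ) + ∫ q in Ioc a b, n q ∂μ := by
      rw [← Set.Icc_union_Ioc_eq_Icc h0a hab]
      exact setIntegral_union hdisj measurableSet_Ioc
        (hIntOn _ (hμfin (Icc_subset_Icc le_rfl (hab.trans hbT))))
        (hIntOn _ (hμfin (fun z hz => ⟨h0a.trans hz.1.le, hz.2.trans hbT⟩)))
    rw [hk_eq b (h0a.trans hab) hbT, hk_eq a h0a (hab.trans hbT), hsplit]
    abel
  -- μ of Ioc equals variation of k
  have hμIoc : ∀ a b, 0 ≤ a → a ≤ b → b ≤ T →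
      μ (Ioc a b) = eVariationOn k (Icc a b) := by
    intro a b h0a hab hbT
    have hdisj : Disjoint (Icc 0 a) (Ioc a b) := by
      rw [Set.disjoint_left]
      rintro z ⟨-, hz2⟩ ⟨hz3, -⟩
      exact absurd hz3 (not_lt.mpr hz2)
    have e1 : μ (Icc 0 a) + μ (Ioc a b) = μ (Icc 0 b) := by
      rw [← measure_union hdisj measurableSet_Ioc, Set.Icc_union_Ioc_eq_Icc h0a hab]
    have e2 : eVariationOn k (Icc 0 a) + eVariationOn k (Icc a b) = eVariationOn k (Icc 0 b) := by
      have := eVariationOn.Icc_add_Icc k (s := (univ : Set ℝ)) h0a hab (mem_univ a)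
      simpa only [Set.univ_inter] using this
    rw [hμvar a ⟨h0a, hab.trans hbT⟩] at e1
    rw [hμvar b ⟨h0a.trans hab, hbT⟩] at e1
    rw [← e2] at e1
    have hfa : eVariationOn k (Icc 0 a) ≠ ⊤ :=
      ne_top_of_le_ne_top hkT (eVariationOn.mono k (Icc_subset_Icc le_rfl (hab.trans hbT)))
    exact (ENNReal.add_right_inj hfa).mp e1
  -- finiteness of variation of x
  have hxT : eVariationOn x (Icc 0 T) ≠ ⊤ := by
    have hEq : eVariationOn x (Icc 0 T) = eVariationOn (fun r => h r + k r) (Icc 0 T) :=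
      eVariationOn.eq_of_eqOn fun r hr => hsol.decomp r hr
    rw [hEq]
    exact ne_top_of_le_ne_top (ENNReal.add_ne_top.mpr ⟨hh_bv, hkT⟩) (eVar_add_le h k (Icc 0 T))
  -- distilled Saisho-type inequality on subintervals with small oscillation of x
  have hSgen : ∀ δb : ℝ, 0 ≤ δb → ∀ u v : ℝ, s ≤ u → v ≤ t →
      (∀ a b, a ∈ Icc u v → b ∈ Icc u v → ‖x a - x b‖ ≤ δb) →
      ∀ a b, u ≤ a → a ≤ b → b ≤ v →
      ‖k b - k a‖ ^ 2 ≤ (2 * (eVariationOn h (Icc a b)).toReal +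
        (min δb (eVariationOn x (Icc a b)).toReal) ^ 2 / r₀) * (μ (Ioc a b)).toReal := by
    intro δb hδb u v hsu hvt hosc a b hua hab hbv
    have h0a : 0 ≤ a := hs.trans (hsu.trans hua)
    have hbT : b ≤ T := (hbv.trans hvt).trans ht
    have hIocT : Ioc a b ⊆ Icc 0 T := fun z hz => ⟨h0a.trans hz.1.le, hz.2.trans hbT⟩
    set Hab := (eVariationOn h (Icc a b)).toReal with hHab_def
    set mn := min δb (eVariationOn x (Icc a b)).toReal with hmn_def
    set c := mn ^ 2 / (2 * r₀) + Hab with hc_def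
    have hkmeas : AEStronglyMeasurable k (μ.restrict (Ioc a b)) :=
      ContinuousOn.aestronglyMeasurable
        (hsol.cont_k.mono (Ioc_subset_Icc_self.trans (Icc_subset_Icc h0a hbT)))
        measurableSet_Ioc
    have hc : ∀ᵐ r ∂(μ.restrict (Ioc a b)), ⟪k r - k a, n r⟫ ≤ c := by
      filter_upwards [ae_restrict_mem measurableSet_Ioc,
        haeT.filter_mono (ae_mono (Measure.restrict_mono hIocT le_rfl))] with r hr hfr
      have hrT : r ∈ Icc 0 T := hIocT hr
      have haT : a ∈ Icc 0 T := ⟨h0a, hab.trans hbT⟩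
      have hkdif : k r - k a = (x r - x a) - (h r - h a) := by
        rw [hsol.decomp a haT, hsol.decomp r hrT]; abel
      have hgeom := geom_ineq hA hfr.1 hfr.2.1 (hsol.mem_closure a haT)
      have hneg : ⟪x a - x r, n r⟫ = -⟪x r - x a, n r⟫ := by
        rw [show x a - x r = -(x r - x a) by abel, inner_neg_left]
      rw [hneg] at hgeom
      have hip : ⟪x r - x a, n r⟫ ≤ ‖x a - x r‖ ^ 2 / (2 * r₀) := by
        rw [le_div_iff₀ (by positivity)]
        nlinarith
      have hVab : ‖x a - x r‖ ≤ (eVariationOn x (Icc a b)).toReal := by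
        have h1 := eVariationOn.edist_le x (show a ∈ Icc a b from ⟨le_rfl, hab⟩)
          (show r ∈ Icc a b from ⟨hr.1.le, hr.2⟩)
        rw [edist_dist] at h1
        have h2 : eVariationOn x (Icc a b) ≠ ⊤ := ne_top_of_le_ne_top hxT
          (eVariationOn.mono x (Icc_subset_Icc h0a hbT))
        have h3 := ENNReal.toReal_mono h2 h1
        rwa [ENNReal.toReal_ofReal dist_nonneg, dist_eq_norm] at h3
      have hδab : ‖x a - x r‖ ≤ δb :=
        hosc a r ⟨hua, hab.trans hbv⟩ ⟨hua.trans hr.1.le, hr.2.trans hbv⟩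
      have hmin : ‖x a - x r‖ ≤ mn := le_min hδab hVab
      have hHb : ‖h r - h a‖ ≤ Hab := by
        have h1 := eVariationOn.edist_le h (show r ∈ Icc a b from ⟨hr.1.le, hr.2⟩)
          (show a ∈ Icc a b from ⟨le_rfl, hab⟩)
        rw [edist_dist] at h1
        have h2 : eVariationOn h (Icc a b) ≠ ⊤ := ne_top_of_le_ne_top hh_bv
          (eVariationOn.mono h (Icc_subset_Icc h0a hbT))
        have h3 := ENNReal.toReal_mono h2 h1
        rwa [ENNReal.toReal_ofReal dist_nonneg, dist_eq_norm] at h3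
      have hinnerh : -Hab ≤ ⟪h r - h a, n r⟫ := by
        have h1 : |⟪h r - h a, n r⟫| ≤ ‖h r - h a‖ * ‖n r‖ := abs_real_inner_le_norm _ _
        have h2 : ‖h r - h a‖ * ‖n r‖ ≤ Hab := by
          calc ‖h r - h a‖ * ‖n r‖ ≤ ‖h r - h a‖ * 1 :=
                mul_le_mul_of_nonneg_left (hb1 r) (norm_nonneg _)
            _ ≤ Hab := by rw [mul_one]; exact hHb
        have := abs_le.mp (h1.trans h2)
        linarith [this.1]
      have hsplit : ⟪k r - k a, n r⟫ = ⟪x r - x a, n r⟫ - ⟪h r - h a, n r⟫ := by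
        rw [hkdif, inner_sub_left]
      rw [hsplit, hc_def]
      have hmsq : ‖x a - x r‖ ^ 2 ≤ mn ^ 2 := by nlinarith [norm_nonneg (x a - x r)]
      have hdiv : ‖x a - x r‖ ^ 2 / (2 * r₀) ≤ mn ^ 2 / (2 * r₀) :=
        (div_le_div_iff_of_pos_right (by positivity)).mpr hmsq
      linarith
    have key := saisho_step μ n k hab hnmeas hb1 (hμfin hIocT)
      (fun a' b' ha' hab' hb' => hkint a' b' (h0a.trans ha') hab' (hb'.trans hbT))
      hkmeas c hc
    have hrw : 2 * c * (μ (Ioc a b)).toReal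
        = (2 * Hab + mn ^ 2 / r₀) * (μ (Ioc a b)).toReal := by
      rw [hc_def]
      have : 2 * (mn ^ 2 / (2 * r₀) + Hab) = 2 * Hab + mn ^ 2 / r₀ := by
        field_simp
        ring
      rw [this]
    rw [hrw] at key
    calc ‖k b - k a‖ ^ 2 ≤ (2 * Hab + mn ^ 2 / r₀) * (μ (Ioc a b)).toReal := key
      _ = _ := by rw [hHab_def, hmn_def]
  -- main interval quantities
  set Eh := eVariationOn h (Icc s t) with hEh_def
  set Ek := eVariationOn k (Icc s t) with hEk_def
  set Ex := eVariationOn x (Icc s t) with hEx_def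
  have hEh_fin : Eh ≠ ⊤ := ne_top_of_le_ne_top hh_bv (eVariationOn.mono h hsubT)
  have hEk_fin : Ek ≠ ⊤ := ne_top_of_le_ne_top hkT (eVariationOn.mono k hsubT)
  have hEx_fin : Ex ≠ ⊤ := ne_top_of_le_ne_top hxT (eVariationOn.mono x hsubT)
  set H := Eh.toReal with hH_def
  set K := Ek.toReal with hK_def
  set V := Ex.toReal with hV_def
  have hμst : μ (Ioc s t) = Ek := hμIoc s t hs hst.le ht
  have hK0 : 0 ≤ K := ENNReal.toReal_nonneg
  have hH0 : 0 ≤ H := ENNReal.toReal_nonneg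
  have hV0 : 0 ≤ V := ENNReal.toReal_nonneg
  -- key claim : K ≤ 2 H
  have hK2H : K ≤ 2 * H := by
    have claim : ∀ δb : ℝ, 0 < δb → K ≤ Real.sqrt ((2 * H + δb * V / r₀) * K) := by
      intro δb hδb
      have hxc : ContinuousOn x (Icc s t) := hsol.cont.mono hsubT
      have hUC := (isCompact_Icc (a := s) (b := t)).uniformContinuousOn_of_continuous hxc
      rw [Metric.uniformContinuousOn_iff] at hUC
      obtain ⟨η, hη, hUC⟩ := hUC δb hδb
      have hts : 0 < t - s := by linarith
      obtain ⟨M, hM0, hmesh⟩ : ∃ M : ℕ, 0 < M ∧ (t - s) / M < η := by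
        refine ⟨⌈(t - s) / η⌉₊ + 1, Nat.succ_pos _, ?_⟩
        rw [div_lt_iff₀ (by positivity)]
        have h1 : (t - s) / η < ((⌈(t - s) / η⌉₊ + 1 : ℕ) : ℝ) := by
          push_cast
          linarith [Nat.le_ceil ((t - s) / η)]
        calc t - s = ((t - s) / η) * η := by field_simp
          _ < ((⌈(t - s) / η⌉₊ + 1 : ℕ) : ℝ) * η := mul_lt_mul_of_pos_right h1 hη
          _ = η * ((⌈(t - s) / η⌉₊ + 1 : ℕ) : ℝ) := mul_comm _ _
      set w : ℕ → ℝ := fun j => s + j * ((t - s) / M) with hw_def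
      have hmesh0 : 0 < (t - s) / M := by positivity
      have hw_mono : Monotone w := by
        intro i j hij
        simp only [hw_def]
        have hij' : (i : ℝ) ≤ j := Nat.cast_le.mpr hij
        nlinarith
      have hw0 : w 0 = s := by simp [hw_def]
      have hwM : w M = t := by
        simp only [hw_def]
        field_simp
        ring
      have hws : ∀ j, j ≤ M → w j ∈ Icc s t := fun j hj =>
        ⟨hw0 ▸ hw_mono (Nat.zero_le j), hwM ▸ hw_mono hj⟩
      have hwidth : ∀ j, w (j + 1) - w j = (t - s) / M := by
        intro j; simp only [hw_def]; push_cast; ring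
      have hcell : ∀ j, j < M → eVariationOn k (Icc (w j) (w (j+1))) ≤
          ENNReal.ofReal (Real.sqrt ((2 * (eVariationOn h (Icc (w j) (w (j+1)))).toReal
            + δb * (eVariationOn x (Icc (w j) (w (j+1)))).toReal / r₀)
            * (μ (Ioc (w j) (w (j+1)))).toReal)) := by
        intro j hj
        have hwj := hws j hj.le
        have hwj1 := hws (j + 1) hj
        have hsub : Icc (w j) (w (j+1)) ⊆ Icc s t := Icc_subset_Icc hwj.1 hwj1.2
        apply cell_bound μ k h x r₀ δb (hw_mono (Nat.le_succ j)) hr₀ hδb.le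
          (ne_top_of_le_ne_top hh_bv (eVariationOn.mono h (hsub.trans hsubT)))
          (ne_top_of_le_ne_top hxT (eVariationOn.mono x (hsub.trans hsubT)))
          (hμfin fun z hz => hsubT (hsub (Ioc_subset_Icc_self hz)))
        apply hSgen δb hδb.le (w j) (w (j + 1)) hwj.1 hwj1.2
        intro a b hav hbv
        have hwd := hwidth j
        have hab : dist a b < η := by
          rw [Real.dist_eq, abs_lt]
          have e1 : w j ≤ a := hav.1
          have e2 : a ≤ w (j + 1) := hav.2
          have e3 : w j ≤ b := hbv.1
          have e4 : b ≤ w (j + 1) := hbv.2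
          clear_value w
          constructor
          · linarith
          · linarith
        have h2 := hUC a (hsub hav) b (hsub hbv) hab
        rw [dist_eq_norm] at h2
        exact h2.le
      have hagg := grid_agg μ k h x r₀ δb hr₀ hδb.le hw_mono M hw0 hwM
        (ne_top_of_le_ne_top hh_bv (eVariationOn.mono h hsubT))
        (ne_top_of_le_ne_top hxT (eVariationOn.mono x hsubT))
        (hμfin fun z hz => hsubT (Ioc_subset_Icc_self hz)) hcell
      rw [← hEk_def, hμst, ← hEh_def, ← hEx_def, ← hH_def, ← hV_def, ← hK_def] at hagg
      have h3 := ENNReal.toReal_mono (by simp) hagg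
      rwa [← hK_def, ENNReal.toReal_ofReal (Real.sqrt_nonneg _)] at h3
    by_cases hKz : K = 0
    · rw [hKz]; positivity
    have hKpos : 0 < K := lt_of_le_of_ne hK0 (Ne.symm hKz)
    have step : ∀ ε : ℝ, 0 < ε → K ≤ 2 * H + ε := by
      intro ε hε
      set δb := ε * r₀ / (V + 1) with hδb_def
      have hδb : 0 < δb := by positivity
      have h1 := claim δb hδb
      have hnn : 0 ≤ (2 * H + δb * V / r₀) * K := by positivity
      have h2 : K ^ 2 ≤ (2 * H + δb * V / r₀) * K := by
        calc K ^ 2 ≤ Real.sqrt ((2 * H + δb * V / r₀) * K) ^ 2 := by nlinarith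
          _ = _ := Real.sq_sqrt hnn
      have h3 : K ≤ 2 * H + δb * V / r₀ := by
        have h4 : K * K ≤ (2 * H + δb * V / r₀) * K := by nlinarith
        exact le_of_mul_le_mul_right h4 hKpos
      have h5 : δb * V / r₀ ≤ ε := by
        have heq : δb * V / r₀ = ε * V / (V + 1) := by
          rw [hδb_def]; field_simp
        rw [heq, div_le_iff₀ (by positivity)]
        nlinarith
      linarith
    linarith [le_of_forall_pos_le_add step]
  -- conclusion
  have hx_le : Ex ≤ Eh + Ek := by
    have hEq : Ex = eVariationOn (fun r => h r + k r) (Icc s t) :=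
      eVariationOn.eq_of_eqOn fun r hr => hsol.decomp r (hsubT hr)
    rw [hEq]
    exact eVar_add_le h k (Icc s t)
  have hEk_le : Ek ≤ 2 * Eh := by
    have h1 : Ek = ENNReal.ofReal K := (ENNReal.ofReal_toReal hEk_fin).symm
    have h2 : ENNReal.ofReal (2 * H) = 2 * Eh := by
      rw [ENNReal.ofReal_mul (by norm_num : (0:ℝ) ≤ 2), ENNReal.ofReal_toReal hEh_fin,
        ENNReal.ofReal_ofNat]
    rw [h1, ← h2]
    exact ENNReal.ofReal_le_ofReal hK2H
  have hconst : (3 : ℝ≥0∞) ≤ ENNReal.ofReal (2 * (Real.sqrt 2 + 1)) := by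
    have hs2 : (1 : ℝ) ≤ Real.sqrt 2 := by
      rw [show (1:ℝ) = Real.sqrt 1 from Real.sqrt_one.symm]
      exact Real.sqrt_le_sqrt (by norm_num)
    have h3 : (3 : ℝ) ≤ 2 * (Real.sqrt 2 + 1) := by nlinarith
    calc (3 : ℝ≥0∞) = ENNReal.ofReal 3 := by
          rw [ENNReal.ofReal_ofNat]
      _ ≤ _ := ENNReal.ofReal_le_ofReal h3
  calc eVariationOn x (Icc s t) ≤ Eh + Ek := hx_le
    _ ≤ Eh + 2 * Eh := add_le_add_right hEk_le _
    _ = 3 * Eh := by ring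
    _ ≤ ENNReal.ofReal (2 * (Real.sqrt 2 + 1)) * Eh := mul_le_mul_left hconst _




end
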